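/- arXiv:2108.00799 — 12 statements merged into one kernel-verified Lean document; each statement's English description precedes it below -/
import Mathlib

section
/- For every λ > 0 there exists a unique π* ∈ (−∞,1) such that Φ(π*, λ) = 0. -/
/-- The first-order condition function
`Φ(π,λ) = (γ−1)(σ²+(σ⁰)²)π − θγ(σ⁰)²π − λ(1−π)^(γ−1) + λ + b`,
where the power is the real power (`Real.rpow`). -/
noncomputable def Phi (b σ σ0 γ θ π lam : ℝ) : ℝ :=
  (γ - 1) * (σ ^ 2 + σ0 ^ 2) * π - θ * γ * σ0 ^ 2 * π
    - lam * (1 - π) ^ (γ - 1) + lam + b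

/-- for every `λ > 0` there exists a unique `π* ∈ (−∞,1)` with
`Φ(π*,λ) = 0`. -/
theorem stmt_0 (b σ σ0 γ θ : ℝ) (hb : 0 < b) (hσ : 0 < σ) (hσ0 : 0 < σ0)
    (hγ0 : 0 < γ) (hγ1 : γ < 1) (hθ0 : 0 ≤ θ) (hθ1 : θ ≤ 1)
    (lam : ℝ) (hlam : 0 < lam) :
    ∃! π : ℝ, π < 1 ∧ Phi b σ σ0 γ θ π lam = 0 := by
  set A : ℝ := (γ - 1) * (σ ^ 2 + σ0 ^ 2) - θ * γ * σ0 ^ 2 with hA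
  have hγ1' : γ - 1 < 0 := by linarith
  have hAneg : A < 0 := by
    have h1 : (γ - 1) * (σ ^ 2 + σ0 ^ 2) < 0 := by
      apply mul_neg_of_neg_of_pos hγ1'; positivity
    have h2 : 0 ≤ θ * γ * σ0 ^ 2 := by positivity
    linarith
  set f : ℝ → ℝ := fun π => Phi b σ σ0 γ θ π lam with hf
  have hfeq : ∀ π, f π = A * π - lam * (1 - π) ^ (γ - 1) + lam + b := by
    intro π; simp only [hf, Phi, hA]; ring_nf
  -- f is strictly antitone on Iio 1
  have hanti : StrictAntiOn f (Set.Iio 1) := by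
    intro x hx y hy hxy
    rw [hfeq, hfeq]
    have h1 : A * y < A * x := by
      exact mul_lt_mul_of_neg_left hxy hAneg
    have h2 : (1 - x) ^ (γ - 1) < (1 - y) ^ (γ - 1) := by
      apply Real.rpow_lt_rpow_of_neg (by simp at hy ⊢; linarith) (by linarith) hγ1'
    nlinarith
  -- f is continuous on Iio 1
  have hcont : ContinuousOn f (Set.Iio 1) := by
    apply ContinuousOn.add
    apply ContinuousOn.add
    apply ContinuousOn.sub
    · fun_prop
    · apply ContinuousOn.mul continuousOn_const
      apply ContinuousOn.rpow_const (by fun_prop)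
      intro x hx
      left
      simp at hx; intro h; linarith
    · exact continuousOn_const
    · exact continuousOn_const
  -- f 0 = b > 0
  have hf0 : f 0 = b := by rw [hfeq]; simp
  -- find c ∈ (0,1) with f c < 0
  set K : ℝ := 1 + b / lam with hK
  have hK1 : 1 < K := by
    have : 0 < b / lam := div_pos hb hlam
    simp [hK]; linarith
  set ε : ℝ := K ^ ((γ - 1)⁻¹) / 2 with hε
  have hKpow_pos : 0 < K ^ ((γ - 1)⁻¹) := Real.rpow_pos_of_pos (by linarith) _
  have hKpow_lt1 : K ^ ((γ - 1)⁻¹) < 1 := by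
    have := Real.rpow_lt_one_of_one_lt_of_neg hK1 (inv_neg''.mpr hγ1')
    exact this
  have hε0 : 0 < ε := by positivity
  have hε1 : ε < 1 := by
    have : ε < K ^ ((γ - 1)⁻¹) := by rw [hε]; linarith
    linarith
  have hεpow : K < ε ^ (γ - 1) := by
    have h1 : ε < K ^ ((γ - 1)⁻¹) := by rw [hε]; linarith
    have := Real.rpow_lt_rpow_of_neg hε0 h1 hγ1'
    rwa [Real.rpow_inv_rpow (by linarith) (ne_of_lt hγ1')] at this
  set c : ℝ := 1 - ε with hc
  have hc0 : 0 < c := by simp [hc]; linarith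
  have hc1 : c < 1 := by simp [hc]; linarith
  have hfc : f c < 0 := by
    rw [hfeq]
    have h1 : A * c < 0 := mul_neg_of_neg_of_pos hAneg hc0
    have h2 : (1 : ℝ) - c = ε := by simp [hc]
    rw [h2]
    have h3 : lam * K < lam * ε ^ (γ - 1) := by
      exact mul_lt_mul_of_pos_left hεpow hlam
    have h4 : lam * K = lam + b := by
      rw [hK]; field_simp
    nlinarith
  -- existence via IVT on [0, c]
  have hIcc : Set.Icc (0:ℝ) c ⊆ Set.Iio 1 := fun x hx => lt_of_le_of_lt hx.2 hc1
  have hivt := intermediate_value_Icc' (le_of_lt hc0) (hcont.mono hIcc)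
  have h0mem : (0:ℝ) ∈ Set.Icc (f c) (f 0) := by
    constructor
    · exact le_of_lt hfc
    · rw [hf0]; exact le_of_lt hb
  obtain ⟨π₀, hπ₀mem, hπ₀⟩ := hivt h0mem
  refine ⟨π₀, ⟨hIcc hπ₀mem, hπ₀⟩, ?_⟩
  intro y hy
  have hπ₀' : π₀ ∈ Set.Iio 1 := hIcc hπ₀mem
  have hy' : y ∈ Set.Iio 1 := hy.1
  by_contra hne
  rcases lt_or_gt_of_ne hne with h | h
  · have := hanti hy' hπ₀' h
    rw [hπ₀, show f y = 0 from hy.2] at this; exact lt_irrefl 0 this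
  · have := hanti hπ₀' hy' h
    rw [hπ₀, show f y = 0 from hy.2] at this; exact lt_irrefl 0 this
end

section
/- For every λ > 0, if π* ∈ (−∞,1) satisfies Φ(π*, λ) = 0, then 0 < π* < 1. -/
/-- for every `λ > 0`, if `π* ∈ (−∞,1)` satisfies `Φ(π*,λ) = 0`,
then `0 < π* < 1`. -/
theorem stmt_1 (b σ σ0 γ θ : ℝ) (hb : 0 < b) (hσ : 0 < σ) (hσ0 : 0 < σ0)
    (hγ0 : 0 < γ) (hγ1 : γ < 1) (hθ0 : 0 ≤ θ) (hθ1 : θ ≤ 1)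
    (lam : ℝ) (hlam : 0 < lam)
    (π : ℝ) (hπ : π < 1) (hroot : Phi b σ σ0 γ θ π lam = 0) :
    0 < π ∧ π < 1 := by
  refine ⟨?_, hπ⟩
  by_contra h
  push_neg at h
  have h1 : (1 : ℝ) ≤ 1 - π := by linarith
  have hpow : (1 - π) ^ (γ - 1) ≤ 1 :=
    Real.rpow_le_one_of_one_le_of_nonpos h1 (by linarith)
  have : (0:ℝ) < Phi b σ σ0 γ θ π lam := by
    unfold Phi
    have h2 : 0 ≤ (1 - γ) * (σ ^ 2 + σ0 ^ 2) * (-π) :=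
      mul_nonneg (mul_nonneg (by linarith) (by positivity)) (by linarith)
    have h3 : 0 ≤ θ * γ * σ0 ^ 2 * (-π) :=
      mul_nonneg (mul_nonneg (mul_nonneg hθ0 hγ0.le) (sq_nonneg σ0)) (by linarith)
    have h4 : lam * (1 - π) ^ (γ - 1) ≤ lam * 1 :=
      mul_le_mul_of_nonneg_left hpow hlam.le
    nlinarith
  linarith [this, hroot.ge]
end

section
/- The function φ is strictly decreasing on (0,∞): for all 0 < λ₁ < λ₂ one has φ(λ₂) < φ(λ₁). -/
/-- Any root of `Phi (·, lam)` with `lam > 0` is positive. -/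
lemma root_pos (b σ σ0 γ θ π lam : ℝ) (hb : 0 < b) (hσ : 0 < σ) (hσ0 : 0 < σ0)
    (hγ0 : 0 < γ) (hγ1 : γ < 1) (hθ0 : 0 ≤ θ) (hlam : 0 < lam)
    (hroot : Phi b σ σ0 γ θ π lam = 0) : 0 < π := by
  by_contra h
  push_neg at h
  have h1 : (1 : ℝ) ≤ 1 - π := by linarith
  have hpow : (1 - π) ^ (γ - 1) ≤ 1 :=
    Real.rpow_le_one_of_one_le_of_nonpos h1 (by linarith)
  have hc : (γ - 1) * (σ ^ 2 + σ0 ^ 2) ≤ 0 :=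
    mul_nonpos_of_nonpos_of_nonneg (by linarith) (by positivity)
  have hA : 0 ≤ (γ - 1) * (σ ^ 2 + σ0 ^ 2) * π := mul_nonneg_of_nonpos_of_nonpos hc h
  have h2 : θ * γ * σ0 ^ 2 * π ≤ 0 :=
    mul_nonpos_of_nonneg_of_nonpos (mul_nonneg (mul_nonneg hθ0 hγ0.le) (sq_nonneg σ0)) h
  have h3 : lam * (1 - π) ^ (γ - 1) ≤ lam := by nlinarith
  have : Phi b σ σ0 γ θ π lam > 0 := by
    unfold Phi; nlinarith
  linarith

/-- the map `φ`, sending each `λ > 0` to the unique `π ∈ (−∞,1)`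
with `Φ(π,λ) = 0`, is strictly decreasing on `(0,∞)`. -/
theorem stmt_4 (b σ σ0 γ θ : ℝ) (hb : 0 < b) (hσ : 0 < σ) (hσ0 : 0 < σ0)
    (hγ0 : 0 < γ) (hγ1 : γ < 1) (hθ0 : 0 ≤ θ) (hθ1 : θ ≤ 1)
    (φ : ℝ → ℝ)
    (hφ : ∀ lam : ℝ, 0 < lam → φ lam < 1 ∧ Phi b σ σ0 γ θ (φ lam) lam = 0) :
    ∀ lam1 lam2 : ℝ, 0 < lam1 → lam1 < lam2 → φ lam2 < φ lam1 := by
  intro lam1 lam2 h1 h12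
  have h2 : 0 < lam2 := h1.trans h12
  obtain ⟨hπ1lt, hr1⟩ := hφ lam1 h1
  obtain ⟨hπ2lt, hr2⟩ := hφ lam2 h2
  set π1 := φ lam1
  set π2 := φ lam2
  have hπ1pos : 0 < π1 := root_pos b σ σ0 γ θ π1 lam1 hb hσ hσ0 hγ0 hγ1 hθ0 h1 hr1
  have hπ2pos : 0 < π2 := root_pos b σ σ0 γ θ π2 lam2 hb hσ hσ0 hγ0 hγ1 hθ0 h2 hr2
  by_contra h
  push_neg at h  -- π1 ≤ π2
  -- (1-π1)^(γ-1) ≤ (1-π2)^(γ-1)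
  have hb2 : (0:ℝ) < 1 - π2 := by linarith
  have hpowmono : (1 - π1) ^ (γ - 1) ≤ (1 - π2) ^ (γ - 1) :=
    Real.rpow_le_rpow_of_nonpos hb2 (by linarith) (by linarith)
  -- (1-π1)^(γ-1) > 1
  have hone : 1 < (1 - π1) ^ (γ - 1) := by
    rw [Real.one_lt_rpow_iff_of_pos (by linarith)]
    right; constructor <;> linarith
  -- Φ(π2, λ2) ≤ Φ(π1, λ2)
  have hmono : Phi b σ σ0 γ θ π2 lam2 ≤ Phi b σ σ0 γ θ π1 lam2 := by
    unfold Phi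
    have hc : (0:ℝ) ≤ (1 - γ) * (σ ^ 2 + σ0 ^ 2) := mul_nonneg (by linarith) (by positivity)
    have hA := mul_le_mul_of_nonneg_left h hc
    have hB := mul_le_mul_of_nonneg_left h (mul_nonneg (mul_nonneg hθ0 hγ0.le) (sq_nonneg σ0))
    nlinarith
  -- Φ(π1, λ2) < Φ(π1, λ1)
  have hstrict : Phi b σ σ0 γ θ π1 lam2 < Phi b σ σ0 γ θ π1 lam1 := by
    unfold Phi
    nlinarith
  rw [hr1, hr2] at *
  linarith
end

section
/- The function φ is differentiable at every λ > 0, with derivative φ'(λ) = −(1 − (1−φ(λ))^(γ−1)) / ((γ−1)(σ² + (σ⁰)²) − θγ(σ⁰)² + (γ−1)λ(1−φ(λ))^(γ−2)), and this derivative is strictly negative. -/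
/-- the map `φ` (sending each `λ > 0` to the unique root of
`Φ(·,λ)` in `(−∞,1)`) is differentiable at every `λ > 0`, with derivative
`φ'(λ) = −(1 − (1−φ(λ))^(γ−1)) /
  ((γ−1)(σ²+(σ⁰)²) − θγ(σ⁰)² + (γ−1)λ(1−φ(λ))^(γ−2))`,
and this derivative is strictly negative. -/
theorem stmt_5 (b σ σ0 γ θ : ℝ) (hb : 0 < b) (hσ : 0 < σ) (hσ0 : 0 < σ0)
    (hγ0 : 0 < γ) (hγ1 : γ < 1) (hθ0 : 0 ≤ θ) (hθ1 : θ ≤ 1)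
    (φ : ℝ → ℝ)
    (hφ : ∀ lam : ℝ, 0 < lam → φ lam < 1 ∧ Phi b σ σ0 γ θ (φ lam) lam = 0) :
    ∀ lam : ℝ, 0 < lam →
      HasDerivAt φ
        (-(1 - (1 - φ lam) ^ (γ - 1)) /
          ((γ - 1) * (σ ^ 2 + σ0 ^ 2) - θ * γ * σ0 ^ 2
            + (γ - 1) * lam * (1 - φ lam) ^ (γ - 2))) lam ∧
      (-(1 - (1 - φ lam) ^ (γ - 1)) /
          ((γ - 1) * (σ ^ 2 + σ0 ^ 2) - θ * γ * σ0 ^ 2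
            + (γ - 1) * lam * (1 - φ lam) ^ (γ - 2))) < 0 := by
  intro lam hlam
  set c : ℝ := (γ - 1) * (σ ^ 2 + σ0 ^ 2) - θ * γ * σ0 ^ 2 with hc_def
  have hc : c < 0 := by
    have h1 : (γ - 1) * (σ ^ 2 + σ0 ^ 2) < 0 :=
      mul_neg_of_neg_of_pos (by linarith) (by positivity)
    have h2 : (0:ℝ) ≤ θ * γ * σ0 ^ 2 := by positivity
    rw [hc_def]; linarith
  have key : ∀ π y : ℝ, Phi b σ σ0 γ θ π y = c * π + y * (1 - (1 - π) ^ (γ - 1)) + b := by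
    intro π y; rw [hc_def]; unfold Phi; ring
  -- strict antitonicity of Phi in π on (-∞, 1)
  have anti : ∀ y : ℝ, 0 ≤ y → ∀ π1 π2 : ℝ, π1 < π2 → π2 < 1 →
      Phi b σ σ0 γ θ π2 y < Phi b σ σ0 γ θ π1 y := by
    intro y hy π1 π2 h12 h2
    rw [key, key]
    have h1 : (1 - π1 : ℝ) ^ (γ - 1) ≤ (1 - π2) ^ (γ - 1) :=
      Real.rpow_le_rpow_of_nonpos (by linarith) (by linarith) (by linarith)
    nlinarith [mul_neg_of_neg_of_pos hc (sub_pos.2 h12),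
      mul_nonneg hy (sub_nonneg.2 h1)]
  -- positivity of φ
  have hpos : ∀ y : ℝ, 0 < y → 0 < φ y := by
    intro y hy
    obtain ⟨h1, h2⟩ := hφ y hy
    by_contra h
    push_neg at h
    have h0 : Phi b σ σ0 γ θ 0 y = b := by
      rw [key]; simp [Real.one_rpow]
    rcases eq_or_lt_of_le h with heq | hlt
    · rw [heq] at h2; rw [h2] at h0; linarith
    · have := anti y hy.le (φ y) 0 hlt one_pos
      rw [h0, h2] at this; linarith
  obtain ⟨hπlt, hPhi0⟩ := hφ lam hlam
  set π0 := φ lam with hπ0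
  have hπ0pos : 0 < π0 := hpos lam hlam
  have h1π0 : 0 < 1 - π0 := by linarith
  have hA : 1 < (1 - π0) ^ (γ - 1) :=
    (Real.one_lt_rpow_iff_of_pos h1π0).2 (Or.inr ⟨by linarith, by linarith⟩)
  have hE : 0 < (1 - π0) ^ (γ - 2) := Real.rpow_pos_of_pos h1π0 _
  set v0 : ℝ := 1 - (1 - π0) ^ (γ - 1) with hv0_def
  have hv0 : v0 < 0 := by rw [hv0_def]; linarith
  set D : ℝ := c + (γ - 1) * lam * (1 - π0) ^ (γ - 2) with hD_def
  have hD : D < 0 := by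
    have h := mul_neg_of_neg_of_pos (show γ - 1 < 0 by linarith)
      (mul_pos hlam hE)
    rw [hD_def]; nlinarith [h]
  -- the inverse map ψ
  set ψ : ℝ → ℝ := fun π => (-c * π - b) / (1 - (1 - π) ^ (γ - 1)) with hψdef
  -- derivative of ψ at π0
  have hderivA : HasDerivAt (fun π : ℝ => (1 - π) ^ (γ - 1))
      ((γ - 1) * (1 - π0) ^ (γ - 2) * (-1)) π0 := by
    have h := (Real.hasDerivAt_rpow_const (x := 1 - π0) (p := γ - 1)
      (Or.inl (ne_of_gt h1π0))).comp π0 ((hasDerivAt_id π0).const_sub 1)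
    simpa [Function.comp_def, show γ - 1 - 1 = γ - 2 by ring] using h
  have hnum : HasDerivAt (fun π : ℝ => -c * π - b) (-c) π0 := by
    simpa using ((hasDerivAt_id π0).const_mul (-c)).sub_const b
  have hden : HasDerivAt (fun π : ℝ => 1 - (1 - π) ^ (γ - 1))
      ((γ - 1) * (1 - π0) ^ (γ - 2)) π0 := by
    simpa using hderivA.const_sub 1
  have hψ0 : HasDerivAt ψ
      (((-c) * (1 - (1 - π0) ^ (γ - 1)) - (-c * π0 - b) * ((γ - 1) * (1 - π0) ^ (γ - 2)))
        / (1 - (1 - π0) ^ (γ - 1)) ^ 2) π0 :=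
    hnum.div hden (by rw [← hv0_def]; exact ne_of_lt hv0)
  -- simplify using the defining equation
  have heq : lam * v0 = -c * π0 - b := by
    have h := hPhi0
    rw [key] at h
    rw [hv0_def]; linarith
  have hψ' : HasDerivAt ψ (-D / v0) π0 := by
    convert hψ0 using 1
    rw [← hv0_def, ← heq, hD_def, hv0_def]
    have hv0' : (1 : ℝ) - (1 - π0) ^ (γ - 1) ≠ 0 := by rw [← hv0_def]; exact ne_of_lt hv0
    field_simp
    ring
  have hψ'ne : -D / v0 ≠ 0 :=
    ne_of_lt (div_neg_of_pos_of_neg (by linarith) hv0)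
  -- local left inverse
  have hinv : ∀ᶠ y in nhds lam, ψ (φ y) = y := by
    filter_upwards [eventually_gt_nhds hlam] with y hy
    obtain ⟨hy1, hy2⟩ := hφ y hy
    have hp := hpos y hy
    have hAy : 1 < (1 - φ y) ^ (γ - 1) :=
      (Real.one_lt_rpow_iff_of_pos (by linarith)).2 (Or.inr ⟨by linarith, by linarith⟩)
    have hvy : 1 - (1 - φ y) ^ (γ - 1) < 0 := by linarith
    have heqy : y * (1 - (1 - φ y) ^ (γ - 1)) = -c * φ y - b := by
      rw [key] at hy2; linarith
    show (-c * φ y - b) / (1 - (1 - φ y) ^ (γ - 1)) = y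
    rw [← heqy, mul_div_assoc, div_self (ne_of_lt hvy), mul_one]
  -- continuity of φ at lam
  have hcont : ContinuousAt φ lam := by
    rw [Metric.continuousAt_iff]
    intro ε hε
    set e : ℝ := min (ε / 2) (min (π0 / 2) ((1 - π0) / 2)) with he_def
    have he : 0 < e := by
      rw [he_def]
      exact lt_min (by linarith) (lt_min (by linarith) (by linarith))
    have he1 : e ≤ ε / 2 := min_le_left _ _
    have he2 : e ≤ π0 / 2 := le_trans (min_le_right _ _) (min_le_left _ _)
    have he3 : e ≤ (1 - π0) / 2 := le_trans (min_le_right _ _) (min_le_right _ _)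
    set a1 : ℝ := π0 - e with ha1
    set a2 : ℝ := π0 + e with ha2
    have hP1 : 0 < Phi b σ σ0 γ θ a1 lam := by
      have h := anti lam hlam.le a1 π0 (by rw [ha1]; linarith) hπlt
      rw [hPhi0] at h; exact h
    have hP2 : Phi b σ σ0 γ θ a2 lam < 0 := by
      have h := anti lam hlam.le π0 a2 (by rw [ha2]; linarith) (by rw [ha2]; linarith)
      rw [hPhi0] at h; exact h
    set P1 : ℝ := Phi b σ σ0 γ θ a1 lam with hP1d
    set P2 : ℝ := Phi b σ σ0 γ θ a2 lam with hP2d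
    set M1 : ℝ := |1 - (1 - a1) ^ (γ - 1)| with hM1
    set M2 : ℝ := |1 - (1 - a2) ^ (γ - 1)| with hM2
    have hM1nn : 0 ≤ M1 := abs_nonneg _
    have hM2nn : 0 ≤ M2 := abs_nonneg _
    set δ : ℝ := min lam (min (P1 / (M1 + 1)) (-P2 / (M2 + 1))) with hδ_def
    have hδpos : 0 < δ := by
      rw [hδ_def]
      exact lt_min hlam (lt_min (div_pos hP1 (by linarith)) (div_pos (by linarith) (by linarith)))
    refine ⟨δ, hδpos, ?_⟩
    intro y hyd
    rw [Real.dist_eq] at hyd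
    have hy : 0 < y := by
      have : δ ≤ lam := min_le_left _ _
      have := abs_lt.1 hyd
      linarith
    obtain ⟨hy1, hy2⟩ := hφ y hy
    have hdiff : ∀ π : ℝ, Phi b σ σ0 γ θ π y
        = Phi b σ σ0 γ θ π lam + (y - lam) * (1 - (1 - π) ^ (γ - 1)) := by
      intro π; rw [key, key]; ring
    -- Phi a1 y > 0
    have quot_lt : ∀ P M : ℝ, 0 < P → 0 ≤ M → P / (M + 1) * M < P := by
      intro P M hP hM
      calc P / (M + 1) * M = P * (M / (M + 1)) := by ring
        _ < P * 1 := by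
            apply mul_lt_mul_of_pos_left _ hP
            rw [div_lt_one (by linarith)]; linarith
        _ = P := mul_one P
    have hbound1 : |(y - lam) * (1 - (1 - a1) ^ (γ - 1))| < P1 := by
      rw [abs_mul]
      have h1 : |y - lam| * M1 ≤ (P1 / (M1 + 1)) * M1 := by
        apply mul_le_mul_of_nonneg_right _ hM1nn
        have : δ ≤ P1 / (M1 + 1) := le_trans (min_le_right _ _) (min_le_left _ _)
        linarith
      calc |y - lam| * M1 ≤ _ := h1
        _ < _ := quot_lt P1 M1 hP1 hM1nn
    have hbound2 : |(y - lam) * (1 - (1 - a2) ^ (γ - 1))| < -P2 := by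
      rw [abs_mul]
      have h1 : |y - lam| * M2 ≤ (-P2 / (M2 + 1)) * M2 := by
        apply mul_le_mul_of_nonneg_right _ hM2nn
        have : δ ≤ -P2 / (M2 + 1) := le_trans (min_le_right _ _) (min_le_right _ _)
        linarith
      calc |y - lam| * M2 ≤ _ := h1
        _ < _ := quot_lt (-P2) M2 (by linarith) hM2nn
    have hPa1y : 0 < Phi b σ σ0 γ θ a1 y := by
      rw [hdiff a1, ← hP1d]
      have := neg_abs_le ((y - lam) * (1 - (1 - a1) ^ (γ - 1)))
      linarith
    have hPa2y : Phi b σ σ0 γ θ a2 y < 0 := by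
      rw [hdiff a2, ← hP2d]
      have := le_abs_self ((y - lam) * (1 - (1 - a2) ^ (γ - 1)))
      linarith
    -- deduce a1 < φ y < a2
    have hgt : a1 < φ y := by
      by_contra h
      push_neg at h
      rcases eq_or_lt_of_le h with heq' | hlt'
      · rw [← heq'] at hPa1y; rw [hy2] at hPa1y; linarith
      · have := anti y hy.le (φ y) a1 hlt' (by rw [ha1]; linarith)
        rw [hy2] at this; linarith
    have hlt2 : φ y < a2 := by
      by_contra h
      push_neg at h
      rcases eq_or_lt_of_le h with heq' | hlt'
      · rw [heq'] at hPa2y; rw [hy2] at hPa2y; linarith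
      · have := anti y hy.le a2 (φ y) hlt' hy1
        rw [hy2] at this; linarith
    rw [Real.dist_eq, abs_lt]
    constructor
    · rw [ha1] at hgt; linarith
    · rw [ha2] at hlt2; linarith
  -- conclude via the inverse function theorem
  have hmain : HasDerivAt φ (-D / v0)⁻¹ lam := by
    refine HasDerivAt.of_local_left_inverse hcont ?_ hψ'ne hinv
    exact hψ'
  have hinveq : (-D / v0)⁻¹ = -v0 / D := by
    rw [inv_div, div_neg, ← neg_div]
  have hneg : -v0 / D < 0 := div_neg_of_pos_of_neg (by linarith) hD
  constructor
  · rw [hinveq] at hmain; exact hmain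
  · exact hneg
end

section
/- The function φ is continuous on (0,∞). -/
lemma phi_strictAntiOn (b σ σ0 γ θ : ℝ) (hσ : 0 < σ) (hσ0 : 0 < σ0)
    (hγ0 : 0 < γ) (hγ1 : γ < 1) (hθ0 : 0 ≤ θ) (lam : ℝ) (hlam : 0 < lam) :
    StrictAntiOn (fun π => Phi b σ σ0 γ θ π lam) (Set.Iio 1) := by
  intro x hx y hy hxy
  simp only [Set.mem_Iio] at hx hy
  have h1 : (1 - y) ^ (γ - 1) > (1 - x) ^ (γ - 1) :=
    Real.rpow_lt_rpow_of_neg (by linarith) (by linarith) (by linarith)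
  have hA : (γ - 1) * (σ ^ 2 + σ0 ^ 2) - θ * γ * σ0 ^ 2 < 0 := by
    nlinarith [sq_nonneg σ, sq_nonneg σ0, mul_pos hσ hσ, mul_pos hσ0 hσ0,
      mul_nonneg (mul_nonneg hθ0 hγ0.le) (sq_nonneg σ0)]
  have h2 : lam * (1 - x) ^ (γ - 1) < lam * (1 - y) ^ (γ - 1) := by
    exact (mul_lt_mul_iff_right₀ hlam).mpr h1
  simp only [Phi]
  nlinarith [mul_lt_mul_of_neg_left hxy hA]

lemma phi_diff (b σ σ0 γ θ π lam lam' : ℝ) :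
    Phi b σ σ0 γ θ π lam' = Phi b σ σ0 γ θ π lam
      + (lam' - lam) * (1 - (1 - π) ^ (γ - 1)) := by
  simp only [Phi]; ring

/-- the map `φ` (sending each `λ > 0` to the unique root of
`Φ(·,λ)` in `(−∞,1)`) is continuous on `(0,∞)`. -/
theorem stmt_6 (b σ σ0 γ θ : ℝ) (hb : 0 < b) (hσ : 0 < σ) (hσ0 : 0 < σ0)
    (hγ0 : 0 < γ) (hγ1 : γ < 1) (hθ0 : 0 ≤ θ) (hθ1 : θ ≤ 1)
    (φ : ℝ → ℝ)
    (hφ : ∀ lam : ℝ, 0 < lam → φ lam < 1 ∧ Phi b σ σ0 γ θ (φ lam) lam = 0) :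
    ContinuousOn φ (Set.Ioi 0) := by
  intro l0 hl0
  rw [Set.mem_Ioi] at hl0
  rw [Metric.continuousWithinAt_iff]
  intro ε hε
  obtain ⟨hp0lt, hroot0⟩ := hφ l0 hl0
  set p0 := φ l0 with hp0def
  -- bracketing points
  set πm : ℝ := p0 - ε with hπm
  set πp : ℝ := min (p0 + ε) ((p0 + 1) / 2) with hπp
  have hπm1 : πm < 1 := by simp only [hπm]; linarith
  have hπp1 : πp < 1 := lt_of_le_of_lt (min_le_right _ _) (by linarith)
  have hπmp0 : πm < p0 := by simp only [hπm]; linarith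
  have hp0πp : p0 < πp := lt_min (by linarith) (by linarith)
  have hanti := phi_strictAntiOn b σ σ0 γ θ hσ hσ0 hγ0 hγ1 hθ0
  have hpos : 0 < Phi b σ σ0 γ θ πm l0 := by
    have := hanti l0 hl0 (Set.mem_Iio.mpr hπm1) (Set.mem_Iio.mpr hp0lt) hπmp0
    simp only at this; rw [hroot0] at this; linarith
  have hneg : Phi b σ σ0 γ θ πp l0 < 0 := by
    have := hanti l0 hl0 (Set.mem_Iio.mpr hp0lt) (Set.mem_Iio.mpr hπp1) hp0πp
    simp only at this; rw [hroot0] at this; linarith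
  set Lm : ℝ := |1 - (1 - πm) ^ (γ - 1)| + 1 with hLm
  set Lp : ℝ := |1 - (1 - πp) ^ (γ - 1)| + 1 with hLp
  have hLmpos : 0 < Lm := by positivity
  have hLppos : 0 < Lp := by positivity
  refine ⟨min (Phi b σ σ0 γ θ πm l0 / Lm) (-(Phi b σ σ0 γ θ πp l0) / Lp),
    lt_min (div_pos hpos hLmpos) (div_pos (by linarith) hLppos), ?_⟩
  intro lam hlam hdist
  rw [Set.mem_Ioi] at hlam
  obtain ⟨hplt, hroot⟩ := hφ lam hlam
  rw [Real.dist_eq] at hdist ⊢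
  have hd1 : |lam - l0| < Phi b σ σ0 γ θ πm l0 / Lm := lt_of_lt_of_le hdist (min_le_left _ _)
  have hd2 : |lam - l0| < -(Phi b σ σ0 γ θ πp l0) / Lp := lt_of_lt_of_le hdist (min_le_right _ _)
  have hb1 : |lam - l0| * Lm < Phi b σ σ0 γ θ πm l0 := (lt_div_iff₀ hLmpos).mp hd1
  have hb2 : |lam - l0| * Lp < -(Phi b σ σ0 γ θ πp l0) := (lt_div_iff₀ hLppos).mp hd2
  -- Phi at πm with lam is positive
  have habs_m : (lam - l0) * (1 - (1 - πm) ^ (γ - 1)) ≥ -(|lam - l0| * Lm) := by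
    have h := abs_mul (lam - l0) (1 - (1 - πm) ^ (γ - 1))
    have h2 : |(lam - l0) * (1 - (1 - πm) ^ (γ - 1))| ≤ |lam - l0| * Lm := by
      rw [h]; apply mul_le_mul_of_nonneg_left _ (abs_nonneg _)
      simp only [hLm]; linarith
    linarith [neg_abs_le ((lam - l0) * (1 - (1 - πm) ^ (γ - 1)))]
  have habs_p : (lam - l0) * (1 - (1 - πp) ^ (γ - 1)) ≤ |lam - l0| * Lp := by
    have h := abs_mul (lam - l0) (1 - (1 - πp) ^ (γ - 1))
    have h2 : |(lam - l0) * (1 - (1 - πp) ^ (γ - 1))| ≤ |lam - l0| * Lp := by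
      rw [h]; apply mul_le_mul_of_nonneg_left _ (abs_nonneg _)
      simp only [hLp]; linarith
    linarith [le_abs_self ((lam - l0) * (1 - (1 - πp) ^ (γ - 1)))]
  have hposm : 0 < Phi b σ σ0 γ θ πm lam := by
    rw [phi_diff b σ σ0 γ θ πm l0 lam]; linarith
  have hnegp : Phi b σ σ0 γ θ πp lam < 0 := by
    rw [phi_diff b σ σ0 γ θ πp l0 lam]; linarith
  have h1 : πm < φ lam := by
    by_contra h
    push_neg at h
    rcases eq_or_lt_of_le h with h' | h'
    · rw [h'] at hroot; linarith
    · have := hanti lam hlam (Set.mem_Iio.mpr hplt) (Set.mem_Iio.mpr hπm1) h'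
      simp only at this; rw [hroot] at this; linarith
  have h2 : φ lam < πp := by
    by_contra h
    push_neg at h
    rcases eq_or_lt_of_le h with h' | h'
    · rw [← h'] at hroot; linarith
    · have := hanti lam hlam (Set.mem_Iio.mpr hπp1) (Set.mem_Iio.mpr hplt) h'
      simp only at this; rw [hroot] at this; linarith
  have hπpε : πp ≤ p0 + ε := min_le_left _ _
  rw [abs_sub_lt_iff]
  constructor <;> simp only [hπm] at h1 <;> linarith
end

section
/- The equilibrium is strictly increasing in the return premium b: for fixed σ > 0, σ⁰ > 0, γ ∈ (0,1), θ ∈ [0,1], λ > 0, if 0 < b₁ < b₂ then π*(b₁) < π*(b₂). -/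
/-- the equilibrium is strictly increasing in the return premium
`b`: if `0 < b₁ < b₂` and `π₁, π₂ ∈ (−∞,1)` are the corresponding roots, then
`π₁ < π₂`. -/
theorem stmt_7 (σ σ0 γ θ lam : ℝ) (hσ : 0 < σ) (hσ0 : 0 < σ0)
    (hγ0 : 0 < γ) (hγ1 : γ < 1) (hθ0 : 0 ≤ θ) (hθ1 : θ ≤ 1) (hlam : 0 < lam)
    (b1 b2 π1 π2 : ℝ) (hb1 : 0 < b1) (hb12 : b1 < b2)
    (hπ1 : π1 < 1) (hroot1 : Phi b1 σ σ0 γ θ π1 lam = 0)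
    (hπ2 : π2 < 1) (hroot2 : Phi b2 σ σ0 γ θ π2 lam = 0) :
    π1 < π2 := by
  by_contra h
  push_neg at h
  have h1 : (0:ℝ) < 1 - π1 := by linarith
  have hr : (1 - π2) ^ (γ - 1) ≤ (1 - π1) ^ (γ - 1) :=
    Real.rpow_le_rpow_of_nonpos h1 (by linarith) (by linarith)
  have h2 : 0 ≤ (1 - γ) * (σ ^ 2 + σ0 ^ 2) * (π1 - π2) :=
    mul_nonneg (mul_nonneg (by linarith) (by positivity)) (by linarith)
  have h3 : 0 ≤ θ * γ * σ0 ^ 2 * (π1 - π2) :=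
    mul_nonneg (mul_nonneg (mul_nonneg hθ0 hγ0.le) (by positivity)) (by linarith)
  have h4 := mul_le_mul_of_nonneg_left hr hlam.le
  unfold Phi at hroot1 hroot2
  nlinarith [h2, h3, h4]
end

section
/- The equilibrium is strictly decreasing in the common volatility σ⁰: for fixed b > 0, σ > 0, γ ∈ (0,1), θ ∈ [0,1], λ > 0, if 0 < σ⁰₁ < σ⁰₂ then π*(σ⁰₂) < π*(σ⁰₁). -/
/-- the equilibrium is strictly decreasing in the common
volatility `σ⁰`: if `0 < σ⁰₁ < σ⁰₂` and `π₁, π₂ ∈ (−∞,1)` are the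
corresponding roots, then `π₂ < π₁`. -/
theorem stmt_9 (b σ γ θ lam : ℝ) (hb : 0 < b) (hσ : 0 < σ)
    (hγ0 : 0 < γ) (hγ1 : γ < 1) (hθ0 : 0 ≤ θ) (hθ1 : θ ≤ 1) (hlam : 0 < lam)
    (σ01 σ02 π1 π2 : ℝ) (hσ01 : 0 < σ01) (hσ012 : σ01 < σ02)
    (hπ1 : π1 < 1) (hroot1 : Phi b σ σ01 γ θ π1 lam = 0)
    (hπ2 : π2 < 1) (hroot2 : Phi b σ σ02 γ θ π2 lam = 0) :
    π2 < π1 := by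
  unfold Phi at hroot1 hroot2
  -- π1 is positive
  have hπ1pos : 0 < π1 := by
    by_contra hp
    push_neg at hp
    have h1 : (1:ℝ) ≤ 1 - π1 := by linarith
    have hr : (1 - π1) ^ (γ - 1) ≤ 1 :=
      Real.rpow_le_one_of_one_le_of_nonpos h1 (by linarith)
    have hA : 0 ≤ (1 - γ) * (σ ^ 2 + σ01 ^ 2) * (-π1) :=
      mul_nonneg (mul_nonneg (by linarith) (by positivity)) (by linarith)
    have hB : 0 ≤ θ * γ * σ01 ^ 2 * (-π1) :=
      mul_nonneg (mul_nonneg (mul_nonneg hθ0 hγ0.le) (sq_nonneg _)) (by linarith)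
    nlinarith [mul_le_mul_of_nonneg_left hr hlam.le, hA, hB]
  by_contra h
  push_neg at h
  have hr12 : (1 - π1) ^ (γ - 1) ≤ (1 - π2) ^ (γ - 1) :=
    Real.rpow_le_rpow_of_nonpos (by linarith) (by linarith) (by linarith)
  have hC2 : (γ - 1) * (σ ^ 2 + σ02 ^ 2) - θ * γ * σ02 ^ 2 < 0 := by
    have h1 : (γ - 1) * (σ ^ 2 + σ02 ^ 2) < 0 :=
      mul_neg_of_neg_of_pos (by linarith) (by positivity)
    have h2 : 0 ≤ θ * γ * σ02 ^ 2 :=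
      mul_nonneg (mul_nonneg hθ0 hγ0.le) (sq_nonneg _)
    linarith
  have hd : σ01 ^ 2 < σ02 ^ 2 := by nlinarith
  have t1 : ((γ - 1) * (σ ^ 2 + σ02 ^ 2) - θ * γ * σ02 ^ 2) * (π2 - π1) ≤ 0 :=
    mul_nonpos_of_nonpos_of_nonneg hC2.le (by linarith)
  have t2 : ((γ - 1) - θ * γ) * (σ02 ^ 2 - σ01 ^ 2) * π1 < 0 := by
    apply mul_neg_of_neg_of_pos _ hπ1pos
    apply mul_neg_of_neg_of_pos _ (by linarith)
    nlinarith [mul_nonneg hθ0 hγ0.le]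
  have t3 : 0 ≤ lam * ((1 - π2) ^ (γ - 1) - (1 - π1) ^ (γ - 1)) :=
    mul_nonneg hlam.le (by linarith)
  nlinarith [t1, t2, t3]
end

section
/- The equilibrium is strictly decreasing in the competition weight θ: for fixed b > 0, σ > 0, σ⁰ > 0, γ ∈ (0,1), λ > 0, if 0 ≤ θ₁ < θ₂ ≤ 1 then π*(θ₂) < π*(θ₁). -/
/-- `Phi` is strictly decreasing in `π` on `(-∞,1)` for `θ ≥ 0`. -/
lemma Phi_strictAnti (b σ σ0 γ lam : ℝ) (hσ : 0 < σ) (hσ0 : 0 < σ0)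
    (hγ0 : 0 < γ) (hγ1 : γ < 1) (hlam : 0 < lam) (θ : ℝ) (hθ : 0 ≤ θ)
    {x y : ℝ} (hxy : x < y) (hy : y < 1) :
    Phi b σ σ0 γ θ y lam < Phi b σ σ0 γ θ x lam := by
  have h1 : (γ - 1) * (σ ^ 2 + σ0 ^ 2) * y < (γ - 1) * (σ ^ 2 + σ0 ^ 2) * x := by
    have hc : (γ - 1) * (σ ^ 2 + σ0 ^ 2) < 0 :=
      mul_neg_of_neg_of_pos (by linarith) (by positivity)
    nlinarith
  have h2 : θ * γ * σ0 ^ 2 * x ≤ θ * γ * σ0 ^ 2 * y := by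
    have : 0 ≤ θ * γ * σ0 ^ 2 := by positivity
    nlinarith
  have h3 : (1 - x) ^ (γ - 1) ≤ (1 - y) ^ (γ - 1) := by
    have := Real.rpow_lt_rpow_of_neg (x := 1 - y) (y := 1 - x) (z := γ - 1)
      (by linarith) (by linarith) (by linarith)
    linarith
  have h4 : lam * (1 - x) ^ (γ - 1) ≤ lam * (1 - y) ^ (γ - 1) := by
    nlinarith
  unfold Phi
  linarith

/-- the equilibrium is strictly decreasing in the competition
weight `θ`: if `0 ≤ θ₁ < θ₂ ≤ 1` and `π₁, π₂ ∈ (−∞,1)` are the corresponding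
roots, then `π₂ < π₁`. -/
theorem stmt_10 (b σ σ0 γ lam : ℝ) (hb : 0 < b) (hσ : 0 < σ) (hσ0 : 0 < σ0)
    (hγ0 : 0 < γ) (hγ1 : γ < 1) (hlam : 0 < lam)
    (θ1 θ2 π1 π2 : ℝ) (hθ1 : 0 ≤ θ1) (hθ12 : θ1 < θ2) (hθ2 : θ2 ≤ 1)
    (hπ1 : π1 < 1) (hroot1 : Phi b σ σ0 γ θ1 π1 lam = 0)
    (hπ2 : π2 < 1) (hroot2 : Phi b σ σ0 γ θ2 π2 lam = 0) :
    π2 < π1 := by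
  have hθ2' : 0 ≤ θ2 := le_of_lt (lt_of_le_of_lt hθ1 hθ12)
  -- Phi at 0 equals b
  have hzero : Phi b σ σ0 γ θ1 0 lam = b := by
    simp [Phi]
  -- π1 > 0
  have hπ1pos : 0 < π1 := by
    by_contra h
    push_neg at h
    rcases lt_or_eq_of_le h with h' | h'
    · have := Phi_strictAnti b σ σ0 γ lam hσ hσ0 hγ0 hγ1 hlam θ1 hθ1 h' one_pos
      rw [hroot1, hzero] at this
      linarith
    · rw [← h'] at hzero
      rw [hroot1] at hzero
      linarith
  -- Phi θ2 π1 < Phi θ1 π1 = 0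
  have hlt : Phi b σ σ0 γ θ2 π1 lam < 0 := by
    rw [← hroot1]
    unfold Phi
    have : θ1 * γ * σ0 ^ 2 * π1 < θ2 * γ * σ0 ^ 2 * π1 := by
      have : 0 < γ * σ0 ^ 2 * π1 := by positivity
      nlinarith
    linarith
  by_contra h
  push_neg at h
  rcases lt_or_eq_of_le h with h' | h'
  · have := Phi_strictAnti b σ σ0 γ lam hσ hσ0 hγ0 hγ1 hlam θ2 hθ2' h' hπ2
    rw [hroot2] at this
    linarith
  · rw [h'] at hlt
    rw [hroot2] at hlt
    linarith
end

section
/- If βς > α(1 − λ∞/λ₀), then the deterministic mean field equilibrium strategy t ↦ π*(t) = φ(λ(t)) is strictly decreasing on [0,∞). -/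
/-- The long-run level `L = αλ∞ / (α − βς)`. -/
noncomputable def longRun (α lamInf β ς : ℝ) : ℝ := α * lamInf / (α - β * ς)

/-- The explicit limiting intensity factor
`λ(t) = L + (λ₀ − L) e^((βς−α)t)`. -/
noncomputable def lamF (α lamInf β ς lam0 : ℝ) (t : ℝ) : ℝ :=
  longRun α lamInf β ς + (lam0 - longRun α lamInf β ς) * Real.exp ((β * ς - α) * t)

/-- Φ is antitone in π on (−∞, 1) for λ ≥ 0. -/
lemma Phi_anti (b σ σ0 γ θ : ℝ) (hσ : 0 < σ) (hσ0 : 0 < σ0)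
    (hγ0 : 0 < γ) (hγ1 : γ < 1) (hθ0 : 0 ≤ θ)
    {lam π π' : ℝ} (hlam : 0 ≤ lam) (hππ' : π ≤ π') (hπ'1 : π' < 1) :
    Phi b σ σ0 γ θ π' lam ≤ Phi b σ σ0 γ θ π lam := by
  unfold Phi
  have h1 : (γ - 1) * (σ ^ 2 + σ0 ^ 2) * π' ≤ (γ - 1) * (σ ^ 2 + σ0 ^ 2) * π := by
    have : (γ - 1) * (σ ^ 2 + σ0 ^ 2) ≤ 0 := by nlinarith [sq_nonneg σ, sq_nonneg σ0]
    exact mul_le_mul_of_nonpos_left hππ' this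
  have h2 : θ * γ * σ0 ^ 2 * π ≤ θ * γ * σ0 ^ 2 * π' := by
    have : 0 ≤ θ * γ * σ0 ^ 2 := by positivity
    exact mul_le_mul_of_nonneg_left hππ' this
  have h3 : lam * (1 - π) ^ (γ - 1) ≤ lam * (1 - π') ^ (γ - 1) := by
    apply mul_le_mul_of_nonneg_left _ hlam
    exact Real.rpow_le_rpow_of_nonpos (by linarith) (by linarith) (by linarith)
  linarith

/-- The root φ(λ) is positive. -/
lemma phi_pos (b σ σ0 γ θ : ℝ) (hb : 0 < b) (hσ : 0 < σ) (hσ0 : 0 < σ0)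
    (hγ0 : 0 < γ) (hγ1 : γ < 1) (hθ0 : 0 ≤ θ)
    {lam π : ℝ} (hlam : 0 < lam) (hπ1 : π < 1) (hroot : Phi b σ σ0 γ θ π lam = 0) :
    0 < π := by
  by_contra h
  push_neg at h
  have h0 : Phi b σ σ0 γ θ 0 lam = b := by
    unfold Phi; simp [Real.one_rpow]
  have := Phi_anti b σ σ0 γ θ hσ hσ0 hγ0 hγ1 hθ0 hlam.le h one_pos
  rw [h0, hroot] at this
  linarith

/-- φ is strictly antitone on positive intensities. -/
lemma phi_strictAnti (b σ σ0 γ θ : ℝ) (hb : 0 < b) (hσ : 0 < σ) (hσ0 : 0 < σ0)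
    (hγ0 : 0 < γ) (hγ1 : γ < 1) (hθ0 : 0 ≤ θ)
    (φ : ℝ → ℝ)
    (hφ : ∀ lam : ℝ, 0 < lam → φ lam < 1 ∧ Phi b σ σ0 γ θ (φ lam) lam = 0)
    {l1 l2 : ℝ} (h1 : 0 < l1) (h2 : 0 < l2) (h12 : l1 < l2) :
    φ l2 < φ l1 := by
  obtain ⟨ha1, hr1⟩ := hφ l1 h1
  obtain ⟨ha2, hr2⟩ := hφ l2 h2
  by_contra h
  push_neg at h
  -- h : φ l1 ≤ φ l2
  have hmono : Phi b σ σ0 γ θ (φ l2) l2 ≤ Phi b σ σ0 γ θ (φ l1) l2 :=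
    Phi_anti b σ σ0 γ θ hσ hσ0 hγ0 hγ1 hθ0 h2.le h ha2
  rw [hr2] at hmono
  have hπpos : 0 < φ l1 := phi_pos b σ σ0 γ θ hb hσ hσ0 hγ0 hγ1 hθ0 h1 ha1 hr1
  -- (1 - φ l1)^(γ-1) > 1
  have hc : 1 < (1 - φ l1) ^ (γ - 1) :=
    (Real.one_lt_rpow_iff_of_pos (by linarith)).mpr (Or.inr ⟨by linarith, by linarith⟩)
  have hdiff : Phi b σ σ0 γ θ (φ l1) l2 - Phi b σ σ0 γ θ (φ l1) l1
      = (l2 - l1) * (1 - (1 - φ l1) ^ (γ - 1)) := by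
    unfold Phi; ring
  rw [hr1] at hdiff
  nlinarith

/-- The intensity λ(t) is strictly increasing. -/
lemma lamF_strictMono (α lamInf β ς lam0 : ℝ) (hα : 0 < α) (hlamInf : 0 < lamInf)
    (hβ : 0 < β) (hς : 0 < ς) (hlam0 : 0 < lam0) (hne : α ≠ β * ς)
    (hcond : α * (1 - lamInf / lam0) < β * ς) :
    StrictMono (lamF α lamInf β ς lam0) := by
  intro s t hst
  set k := β * ς - α with hk
  set L := longRun α lamInf β ς with hL
  have hck : 0 < (lam0 - L) * k := by
    rcases lt_or_gt_of_ne hne with hlt | hgt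
    · -- α < βς : k > 0, L < 0
      have hk0 : 0 < k := by simp [hk]; linarith
      have hLneg : L < 0 := by
        rw [hL, longRun]
        apply div_neg_of_pos_of_neg (by positivity) (by linarith)
      have : 0 < lam0 - L := by linarith
      positivity
    · -- α > βς : k < 0, lam0 < L
      have hk0 : k < 0 := by simp [hk]; linarith
      have hden : 0 < α - β * ς := by linarith
      have hlamL : lam0 < L := by
        rw [hL, longRun, lt_div_iff₀ hden]
        have h' : α * (1 - lamInf / lam0) * lam0 < β * ς * lam0 :=
          mul_lt_mul_of_pos_right hcond hlam0
        have : α * lam0 - α * lamInf < β * ς * lam0 := by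
          field_simp at h'; nlinarith
        nlinarith
      have h1 : lam0 - L < 0 := by linarith
      exact mul_pos_of_neg_of_neg h1 hk0
  have hexp : (lam0 - L) * Real.exp (k * s) < (lam0 - L) * Real.exp (k * t) := by
    rcases lt_or_gt_of_ne hne with hlt | hgt
    · have hk0 : 0 < k := by simp [hk]; linarith
      have hc : 0 < lam0 - L := by nlinarith
      exact mul_lt_mul_of_pos_left (Real.exp_lt_exp.mpr (by nlinarith)) hc
    · have hk0 : k < 0 := by simp [hk]; linarith
      have hc : lam0 - L < 0 := by nlinarith
      have : Real.exp (k * t) < Real.exp (k * s) := Real.exp_lt_exp.mpr (by nlinarith)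
      exact mul_lt_mul_of_neg_left this hc
  simpa [lamF, ← hL, ← hk] using add_lt_add_left hexp L

/-- if `βς > α(1 − λ∞/λ₀)`, then the deterministic mean field
equilibrium strategy `t ↦ π*(t) = φ(λ(t))` is strictly decreasing on `[0,∞)`. -/
theorem stmt_15 (α lamInf β ς lam0 : ℝ) (hα : 0 < α) (hlamInf : 0 < lamInf)
    (hβ : 0 < β) (hς : 0 < ς) (hlam0 : 0 < lam0) (hne : α ≠ β * ς)
    (hcond : α * (1 - lamInf / lam0) < β * ς)
    (hpos : ∀ t : ℝ, 0 ≤ t → 0 < lamF α lamInf β ς lam0 t)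
    (b σ σ0 γ θ : ℝ) (hb : 0 < b) (hσ : 0 < σ) (hσ0 : 0 < σ0)
    (hγ0 : 0 < γ) (hγ1 : γ < 1) (hθ0 : 0 ≤ θ) (hθ1 : θ ≤ 1)
    (φ : ℝ → ℝ)
    (hφ : ∀ lam : ℝ, 0 < lam → φ lam < 1 ∧ Phi b σ σ0 γ θ (φ lam) lam = 0) :
    StrictAntiOn (fun t => φ (lamF α lamInf β ς lam0 t)) (Set.Ici 0) := by
  intro s hs t ht hst
  exact phi_strictAnti b σ σ0 γ θ hb hσ hσ0 hγ0 hγ1 hθ0 φ hφ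
    (hpos s hs) (hpos t ht)
    (lamF_strictMono α lamInf β ς lam0 hα hlamInf hβ hς hlam0 hne hcond hst)
end

section
/- If βς < α, then the deterministic mean field equilibrium strategy converges to a long-run steady level: φ(λ(t)) → φ(αλ∞/(α − βς)) as t → ∞. -/
/-- Strict antitonicity of `Phi` in `π` on `(-∞, 1)` for `lam > 0`. -/
lemma phi_strict_anti (b σ σ0 γ θ lam π1 π2 : ℝ) (hσ : 0 < σ) (hσ0 : 0 < σ0)
    (hγ0 : 0 < γ) (hγ1 : γ < 1) (hθ0 : 0 ≤ θ) (hlam : 0 < lam)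
    (h12 : π1 < π2) (h21 : π2 < 1) :
    Phi b σ σ0 γ θ π2 lam < Phi b σ σ0 γ θ π1 lam := by
  have hA : (γ - 1) * (σ ^ 2 + σ0 ^ 2) - θ * γ * σ0 ^ 2 < 0 := by
    nlinarith [sq_nonneg σ, sq_nonneg σ0, mul_pos hσ hσ, mul_pos hσ0 hσ0,
      mul_nonneg (mul_nonneg hθ0 hγ0.le) (sq_nonneg σ0)]
  have hr : (1 - π2 : ℝ) ^ (γ - 1) > (1 - π1) ^ (γ - 1) :=
    Real.rpow_lt_rpow_of_neg (by linarith) (by linarith) (by linarith)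
  unfold Phi
  nlinarith [mul_pos hlam (sub_pos.mpr hr),
    mul_neg_of_neg_of_pos hA (sub_pos.mpr h12)]

/-- if `βς < α`, then the deterministic mean field equilibrium
strategy converges to a long-run steady level:
`φ(λ(t)) → φ(αλ∞/(α − βς))` as `t → ∞`. -/
theorem stmt_16 (α lamInf β ς lam0 : ℝ) (hα : 0 < α) (hlamInf : 0 < lamInf)
    (hβ : 0 < β) (hς : 0 < ς) (hlam0 : 0 < lam0) (hlt : β * ς < α)
    (hpos : ∀ t : ℝ, 0 ≤ t → 0 < lamF α lamInf β ς lam0 t)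
    (b σ σ0 γ θ : ℝ) (hb : 0 < b) (hσ : 0 < σ) (hσ0 : 0 < σ0)
    (hγ0 : 0 < γ) (hγ1 : γ < 1) (hθ0 : 0 ≤ θ) (hθ1 : θ ≤ 1)
    (φ : ℝ → ℝ)
    (hφ : ∀ lam : ℝ, 0 < lam → φ lam < 1 ∧ Phi b σ σ0 γ θ (φ lam) lam = 0) :
    Filter.Tendsto (fun t => φ (lamF α lamInf β ς lam0 t)) Filter.atTop
      (nhds (φ (α * lamInf / (α - β * ς)))) := by
  set L : ℝ := α * lamInf / (α - β * ς) with hLdef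
  have hL : 0 < L := div_pos (mul_pos hα hlamInf) (by linarith)
  -- λ(t) → L
  have hlamT : Filter.Tendsto (lamF α lamInf β ς lam0) Filter.atTop (nhds L) := by
    have h1 : Filter.Tendsto (fun t : ℝ => (β * ς - α) * t) Filter.atTop Filter.atBot :=
      (Filter.tendsto_const_mul_atBot_of_neg (by linarith)).mpr Filter.tendsto_id
    have h2 : Filter.Tendsto (fun t : ℝ => Real.exp ((β * ς - α) * t))
        Filter.atTop (nhds 0) := Real.tendsto_exp_atBot.comp h1
    have h3 : Filter.Tendsto (lamF α lamInf β ς lam0) Filter.atTop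
        (nhds (longRun α lamInf β ς + (lam0 - longRun α lamInf β ς) * 0)) := by
      unfold lamF
      exact (tendsto_const_nhds.add ((tendsto_const_nhds.mul h2)))
    simpa [longRun, hLdef] using h3
  -- properties of π* = φ L
  obtain ⟨hπ1, hπeq⟩ := hφ L hL
  set p : ℝ := φ L with hpdef
  rw [Metric.tendsto_nhds]
  intro ε hε
  set ε' : ℝ := min ε ((1 - p) / 2) with hε'def
  have hε' : 0 < ε' := lt_min hε (by linarith)
  have hε'1 : p + ε' < 1 := by
    have : ε' ≤ (1 - p) / 2 := min_le_right _ _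
    linarith
  -- sign of Phi at p ± ε' at lam = L
  have hgt : 0 < Phi b σ σ0 γ θ (p - ε') L := by
    have := phi_strict_anti b σ σ0 γ θ L (p - ε') p hσ hσ0 hγ0 hγ1 hθ0 hL
      (by linarith) hπ1
    linarith
  have hlt2 : Phi b σ σ0 γ θ (p + ε') L < 0 := by
    have := phi_strict_anti b σ σ0 γ θ L p (p + ε') hσ hσ0 hγ0 hγ1 hθ0 hL
      (by linarith) hε'1
    linarith
  -- continuity of Phi in lam
  have hcont : ∀ π : ℝ, Continuous fun lam => Phi b σ σ0 γ θ π lam := by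
    intro π
    unfold Phi
    continuity
  have hE1 : ∀ᶠ t in Filter.atTop,
      0 < Phi b σ σ0 γ θ (p - ε') (lamF α lamInf β ς lam0 t) :=
    (((hcont (p - ε')).continuousAt.tendsto.comp hlamT)).eventually
      (eventually_gt_nhds hgt)
  have hE2 : ∀ᶠ t in Filter.atTop,
      Phi b σ σ0 γ θ (p + ε') (lamF α lamInf β ς lam0 t) < 0 :=
    (((hcont (p + ε')).continuousAt.tendsto.comp hlamT)).eventually
      (eventually_lt_nhds hlt2)
  have hE3 : ∀ᶠ t in Filter.atTop, 0 < lamF α lamInf β ς lam0 t := by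
    filter_upwards [Filter.eventually_ge_atTop (0 : ℝ)] with t ht
    exact hpos t ht
  filter_upwards [hE1, hE2, hE3] with t h1 h2 h3
  obtain ⟨hφ1, hφeq⟩ := hφ _ h3
  set q : ℝ := φ (lamF α lamInf β ς lam0 t) with hqdef
  have hqgt : p - ε' < q := by
    by_contra h
    push_neg at h
    rcases eq_or_lt_of_le h with h | h
    · rw [h] at hφeq; linarith
    · have := phi_strict_anti b σ σ0 γ θ (lamF α lamInf β ς lam0 t) q (p - ε')
        hσ hσ0 hγ0 hγ1 hθ0 h3 h (by linarith)
      linarith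
  have hqlt : q < p + ε' := by
    by_contra h
    push_neg at h
    rcases eq_or_lt_of_le h with h | h
    · rw [← h] at hφeq; linarith
    · have := phi_strict_anti b σ σ0 γ θ (lamF α lamInf β ς lam0 t) (p + ε') q
        hσ hσ0 hγ0 hγ1 hθ0 h3 h hφ1
      linarith
  have hεε : ε' ≤ ε := min_le_left _ _
  rw [Real.dist_eq, abs_lt]
  constructor <;> [skip; skip] <;> linarith
end

section
/- For every shift c ∈ ℝ and every λ > 0, there exists a unique π̂ ∈ (−∞,1) such that Ψ(π̂) = 0, where Ψ(π) = (γ−1)(σ² + (σ⁰)²)π − c − λ(1−π)^(γ−1) + λ + b. -/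
open Filter Set Topology

/-- The shifted first-order condition function of the auxiliary problem:
`Ψ(π) = (γ−1)(σ²+(σ⁰)²)π − c − λ(1−π)^(γ−1) + λ + b`,
where the power is the real power (`Real.rpow`). -/
noncomputable def Psi (b σ σ0 γ c lam π : ℝ) : ℝ :=
  (γ - 1) * (σ ^ 2 + σ0 ^ 2) * π - c - lam * (1 - π) ^ (γ - 1) + lam + b

/-- for every shift `c ∈ ℝ` and every `λ > 0`, there is a unique
`piHat ∈ (−∞,1)` with `Ψ(piHat) = 0`. -/
theorem stmt_17 (b σ σ0 γ : ℝ) (hb : 0 < b) (hσ : 0 < σ) (hσ0 : 0 < σ0)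
    (hγ0 : 0 < γ) (hγ1 : γ < 1) (c lam : ℝ) (hlam : 0 < lam) :
    ∃! π : ℝ, π < 1 ∧ Psi b σ σ0 γ c lam π = 0 := by
  set f : ℝ → ℝ := Psi b σ σ0 γ c lam with hf
  set A : ℝ := (γ - 1) * (σ ^ 2 + σ0 ^ 2) with hA
  have hApos : 0 < σ ^ 2 + σ0 ^ 2 := by positivity
  have hAneg : A < 0 := mul_neg_of_neg_of_pos (by linarith) hApos
  -- strict antitonicity on Iio 1
  have hanti : StrictAntiOn f (Iio 1) := by
    intro x hx y hy hxy
    simp only [mem_Iio] at hx hy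
    have h1 : (1 - x) ^ (γ - 1) < (1 - y) ^ (γ - 1) :=
      Real.rpow_lt_rpow_of_neg (by linarith) (by linarith) (by linarith)
    have h2 : lam * (1 - x) ^ (γ - 1) < lam * (1 - y) ^ (γ - 1) :=
      (mul_lt_mul_iff_right₀ hlam).2 h1
    have h3 : A * y < A * x := by
      exact mul_lt_mul_of_neg_left hxy hAneg
    simp only [hf, Psi, ← hA]
    linarith
  -- f tends to -∞ as π → 1⁻
  have hrpow_top : Tendsto (fun t : ℝ => t ^ (γ - 1)) (𝓝[>] (0 : ℝ)) atTop := by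
    have h1 : Tendsto (fun t : ℝ => (t⁻¹) ^ (1 - γ)) (𝓝[>] (0 : ℝ)) atTop :=
      (tendsto_rpow_atTop (by linarith)).comp tendsto_inv_nhdsGT_zero
    refine h1.congr' ?_
    filter_upwards [self_mem_nhdsWithin] with t (ht : 0 < t)
    rw [Real.inv_rpow ht.le, ← Real.rpow_neg ht.le, neg_sub]
  have hsub : Tendsto (fun π : ℝ => 1 - π) (𝓝[<] (1 : ℝ)) (𝓝[>] (0 : ℝ)) := by
    apply tendsto_nhdsWithin_of_tendsto_nhds_of_eventually_within
    · have : Tendsto (fun π : ℝ => 1 - π) (𝓝 (1 : ℝ)) (𝓝 (1 - 1)) :=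
        (tendsto_const_nhds.sub tendsto_id)
      simpa using this.mono_left nhdsWithin_le_nhds
    · filter_upwards [self_mem_nhdsWithin] with x (hx : x < 1)
      simpa using sub_pos.2 hx
  have htop : Tendsto (fun π => lam * (1 - π) ^ (γ - 1)) (𝓝[<] (1 : ℝ)) atTop := by
    exact (tendsto_const_mul_atTop_of_pos hlam).2 (hrpow_top.comp hsub)
  have hbdd : Tendsto (fun π : ℝ => A * π - c + lam + b) (𝓝[<] (1 : ℝ))
      (𝓝 (A * 1 - c + lam + b)) := by
    exact (((tendsto_id.const_mul A).sub_const c).add_const lam |>.add_const b).mono_left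
      nhdsWithin_le_nhds
  have hbot : Tendsto f (𝓝[<] (1 : ℝ)) atBot := by
    have := hbdd.add_atBot (tendsto_neg_atBot_iff.2 htop)
    refine this.congr fun π => ?_
    simp only [hf, Psi, ← hA]; ring
  -- there is π₁ < 1 with f π₁ < 0
  obtain ⟨π₁, hπ₁lt, hπ₁neg⟩ : ∃ π₁, π₁ < 1 ∧ f π₁ < 0 := by
    have h1 : ∀ᶠ π in 𝓝[<] (1 : ℝ), f π < 0 := hbot.eventually (eventually_lt_atBot 0)
    have h2 : ∀ᶠ π in 𝓝[<] (1 : ℝ), π < 1 := self_mem_nhdsWithin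
    rcases (h2.and h1).exists with ⟨π₁, h, h'⟩
    exact ⟨π₁, h, h'⟩
  -- f tends to +∞ as π → -∞
  have hatTop : Tendsto f atBot atTop := by
    have h1 : Tendsto (fun π : ℝ => A * π) atBot atTop :=
      (tendsto_const_mul_atTop_of_neg hAneg).2 tendsto_id
    have h2 : Tendsto (fun π : ℝ => 1 - π) atBot atTop :=
      tendsto_atTop_add_const_left _ 1 (tendsto_neg_atBot_atTop)
    have h3 : Tendsto (fun π : ℝ => lam * (1 - π) ^ (γ - 1)) atBot (𝓝 (lam * 0)) := by
      refine Tendsto.const_mul lam ?_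
      have := (tendsto_rpow_neg_atTop (y := 1 - γ) (by linarith)).comp h2
      simpa [neg_sub, Function.comp_def] using this
    have h4 : Tendsto (fun π : ℝ => A * π - c - lam * (1 - π) ^ (γ - 1) + lam + b)
        atBot atTop := by
      have h5 := (h1.atTop_add h3.neg).atTop_add
        (tendsto_const_nhds (x := (-c + lam + b)) (f := (atBot : Filter ℝ)))
      refine h5.congr fun π => ?_
      ring
    refine h4.congr fun π => ?_
    simp only [hf, Psi, ← hA]
  obtain ⟨π₀, hπ₀lt, hπ₀pos⟩ : ∃ π₀, π₀ < π₁ ∧ 0 < f π₀ := by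
    have h1 : ∀ᶠ π in atBot, 0 < f π := hatTop.eventually (eventually_gt_atTop 0)
    have h2 : ∀ᶠ π in (atBot : Filter ℝ), π < π₁ := eventually_lt_atBot π₁
    rcases (h2.and h1).exists with ⟨π₀, h, h'⟩
    exact ⟨π₀, h, h'⟩
  -- continuity on [π₀, π₁]
  have hcont : ContinuousOn f (Icc π₀ π₁) := by
    have hr : ContinuousOn (fun π : ℝ => (1 - π) ^ (γ - 1)) (Icc π₀ π₁) := by
      apply ContinuousOn.rpow_const
      · exact (continuous_const.sub continuous_id).continuousOn
      · intro x hx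
        left
        have hx1 : x < 1 := lt_of_le_of_lt hx.2 hπ₁lt
        exact ne_of_gt (by linarith : (0:ℝ) < 1 - x)
    simp only [hf, Psi]
    exact ((((continuous_const.mul continuous_id).continuousOn.sub continuousOn_const).sub
      (continuousOn_const.mul hr)).add continuousOn_const).add continuousOn_const
  -- IVT
  have h0mem : (0 : ℝ) ∈ Icc (f π₁) (f π₀) := ⟨hπ₁neg.le, hπ₀pos.le⟩
  obtain ⟨piHat, hpiHatmem, hpiHateq⟩ := intermediate_value_Icc' hπ₀lt.le hcont h0mem
  have hpiHatlt : piHat < 1 := lt_of_le_of_lt hpiHatmem.2 hπ₁lt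
  refine ⟨piHat, ⟨hpiHatlt, hpiHateq⟩, ?_⟩
  rintro y ⟨hy1, hy2⟩
  exact hanti.injOn hy1 hpiHatlt (by rw [hy2, hpiHateq])
end

section
/- Suppose c ≥ 0, K ≥ 0, λ > 0, and π̃ ∈ (−∞,1) satisfies |Ψ(π̃)| ≤ K. Then π̃ ≥ −(K + c)/((1−γ)(σ² + (σ⁰)²)); moreover, if in addition π̃ ≥ 0, then 1 − π̃ ≥ (λ/(K + λ + b))^(1/(1−γ)). -/
/-- if `c ≥ 0`, `K ≥ 0`, `λ > 0`, and `π̃ < 1` satisfies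
`|Ψ(π̃)| ≤ K`, then `π̃ ≥ −(K + c)/((1−γ)(σ²+(σ⁰)²))`; moreover, if `π̃ ≥ 0`,
then `1 − π̃ ≥ (λ/(K + λ + b))^(1/(1−γ))`. -/
theorem stmt_18 (b σ σ0 γ : ℝ) (hb : 0 < b) (hσ : 0 < σ) (hσ0 : 0 < σ0)
    (hγ0 : 0 < γ) (hγ1 : γ < 1) (c K lam : ℝ) (hc : 0 ≤ c) (hK : 0 ≤ K)
    (hlam : 0 < lam) (π : ℝ) (hπ : π < 1)
    (habs : |Psi b σ σ0 γ c lam π| ≤ K) :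
    -(K + c) / ((1 - γ) * (σ ^ 2 + σ0 ^ 2)) ≤ π ∧
    (0 ≤ π → (lam / (K + lam + b)) ^ (1 / (1 - γ)) ≤ 1 - π) := by
  have hS : (0:ℝ) < σ ^ 2 + σ0 ^ 2 := by positivity
  have h1π : (0:ℝ) < 1 - π := by linarith
  obtain ⟨hlo, hhi⟩ := abs_le.mp habs
  set p : ℝ := (1 - π) ^ (γ - 1) with hp
  have hp0 : 0 < p := Real.rpow_pos_of_pos h1π _
  have hΨ : Psi b σ σ0 γ c lam π = (γ - 1) * (σ ^ 2 + σ0 ^ 2) * π - c - lam * p + lam + b := rfl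
  rw [hΨ] at hlo hhi
  constructor
  · rw [div_le_iff₀ (by nlinarith)]
    rcases le_or_gt 0 π with h0 | h0
    · nlinarith [mul_nonneg h0 (mul_nonneg (by linarith : (0:ℝ) ≤ 1 - γ) hS.le)]
    · have hple : p ≤ 1 :=
        Real.rpow_le_one_of_one_le_of_nonpos (by linarith) (by linarith)
      nlinarith
  · intro h0
    have hA : 0 < K + lam + b := by positivity
    -- lam * p ≤ K + lam + b
    have hlp : lam * p ≤ K + lam + b := by nlinarith [mul_nonneg (mul_nonneg (by linarith : (0:ℝ) ≤ 1 - γ) hS.le) h0]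
    have hq : lam / (K + lam + b) ≤ (1 - π) ^ (1 - γ) := by
      have hinv : (1 - π) ^ (1 - γ) = p⁻¹ := by
        rw [hp, ← Real.rpow_neg_one, ← Real.rpow_mul h1π.le]
        ring_nf
      rw [hinv, ← one_div, div_le_div_iff₀ hA hp0]
      linarith
    calc (lam / (K + lam + b)) ^ (1 / (1 - γ))
        ≤ ((1 - π) ^ (1 - γ)) ^ (1 / (1 - γ)) :=
          Real.rpow_le_rpow (by positivity) hq (le_of_lt (div_pos one_pos (by linarith)))
      _ = 1 - π := by
          rw [← Real.rpow_mul h1π.le, mul_one_div, div_self (by linarith), Real.rpow_one]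
end
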